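/- (Milnor–Wood inequality for flat circle bundles.) Let g ≥ 1 and let F₁, G₁, …, F_g, G_g be lifts of orientation-preserving circle homeomorphisms. If the product of commutators [F₁,G₁] ∘ ⋯ ∘ [F_g,G_g] equals the translation T_e for some integer e, then |e| ≤ 2g − 2. -/

import Mathlib

/-- A lift of an orientation-preserving circle homeomorphism: a strictly increasing
bijection `F : ℝ → ℝ` with `F (x + 1) = F x + 1` for all `x`. -/
def IsCircleLift (F : ℝ → ℝ) : Prop :=
  StrictMono F ∧ Function.Bijective F ∧ ∀ x : ℝ, F (x + 1) = F x + 1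

/-- The commutator `[F, G] = F ∘ G ∘ F⁻¹ ∘ G⁻¹` of two bijections of `ℝ`. -/
noncomputable def circleComm (F G : ℝ → ℝ) : ℝ → ℝ :=
  F ∘ G ∘ Function.invFun F ∘ Function.invFun G

/-!
Write `d_F x = F x - x` for the displacement of a lift. Monotonicity and `1`-periodicity of
`d_F` force its oscillation to be less than `1`. For a commutator `[F, G]`, evaluating at
`G (F x₀)`, where `x₀` minimizes `d_G`, gives `d_{[F,G]} < 1` there; together with the same
bound for `[G, F] = [F, G]⁻¹` and the intermediate value theorem, `[F, G]` moves some point by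
less than `1`, hence every point by less than `2`. Composing `g` commutators at the good point
of the innermost one, the translation `T_e` moves a point by less than `2 g - 1`.
-/

lemma CircleDeg1Lift.sub_self_lt_sub_self_add_one (f : CircleDeg1Lift) (x y : ℝ) :
    f x - x < f y - y + 1 := by
  have hx : x ≤ y + ⌈x - y⌉ := by linarith [Int.le_ceil (x - y)]
  have hn : (⌈x - y⌉ : ℝ) < x - y + 1 := Int.ceil_lt_add_one (x - y)
  have := f.mono hx
  rw [f.map_add_int] at this
  linarith

lemma abs_foldr_comp_sub_lt {a b : ℝ} {L : List (ℝ → ℝ)} (hne : L ≠ [])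
    (hL : ∀ c ∈ L, (∃ y, |c y - y| < a) ∧ ∀ x, |c x - x| < b) :
    ∃ y, |L.foldr (· ∘ ·) id y - y| < (L.length - 1) * b + a := by
  induction L with
  | nil => exact absurd rfl hne
  | cons c L ih =>
    obtain rfl | hne' := eq_or_ne L []
    · simpa using (hL c List.mem_cons_self).1
    obtain ⟨y, hy⟩ := ih hne' fun d hd => hL d (List.mem_cons_of_mem c hd)
    have hc := (hL c List.mem_cons_self).2 (L.foldr (· ∘ ·) id y)
    refine ⟨y, ?_⟩
    simp only [List.foldr_cons, Function.comp_apply, List.length_cons, Nat.cast_succ]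
    calc |c (L.foldr (· ∘ ·) id y) - y|
        ≤ |c (L.foldr (· ∘ ·) id y) - L.foldr (· ∘ ·) id y| + |L.foldr (· ∘ ·) id y - y| :=
          abs_sub_le _ _ _
      _ < (L.length + 1 - 1) * b + a := by linarith

namespace IsCircleLift

variable {F G : ℝ → ℝ}

def toCircleDeg1Lift (hF : IsCircleLift F) : CircleDeg1Lift :=
  ⟨⟨F, hF.1.monotone⟩, hF.2.2⟩

lemma abs_sub_self_sub_sub_self_lt_one (hF : IsCircleLift F) (x y : ℝ) :
    |(F x - x) - (F y - y)| < 1 := by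
  have : ∀ x y, F x - x < F y - y + 1 := hF.toCircleDeg1Lift.sub_self_lt_sub_self_add_one
  rw [abs_sub_lt_iff]
  constructor <;> linarith [this x y, this y x]

lemma continuous (hF : IsCircleLift F) : Continuous F :=
  hF.1.monotone.continuous_of_surjective hF.2.1.2

lemma exists_forall_sub_self_le (hF : IsCircleLift F) : ∃ x₀, ∀ y, F x₀ - x₀ ≤ F y - y := by
  have hper : Function.Periodic (fun x => F x - x) 1 := fun x => by simp [hF.2.2]
  obtain ⟨_, ⟨x₀, rfl⟩, hmin⟩ :=
    (hper.compact_of_continuous one_ne_zero (hF.continuous.sub continuous_id)).exists_isLeast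
      (Set.range_nonempty _)
  exact ⟨x₀, fun y => hmin ⟨y, rfl⟩⟩

lemma comp (hF : IsCircleLift F) (hG : IsCircleLift G) : IsCircleLift (F ∘ G) :=
  ⟨hF.1.comp hG.1, hF.2.1.comp hG.2.1, fun x => by simp only [Function.comp_apply, hG.2.2, hF.2.2]⟩

lemma invFun (hF : IsCircleLift F) : IsCircleLift (Function.invFun F) := by
  have hri : Function.RightInverse (Function.invFun F) F := Function.rightInverse_invFun hF.2.1.2
  refine ⟨fun a b hab => ?_, ?_, fun x => hF.2.1.1 ?_⟩
  · rwa [← hF.1.lt_iff_lt, hri a, hri b]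
  · exact Function.bijective_iff_has_inverse.mpr ⟨F, hri, Function.leftInverse_invFun hF.2.1.1⟩
  · rw [hri, hF.2.2, hri]

lemma circleComm (hF : IsCircleLift F) (hG : IsCircleLift G) : IsCircleLift (circleComm F G) :=
  hF.comp (hG.comp (hF.invFun.comp hG.invFun))

end IsCircleLift

section Commutator

variable {F G : ℝ → ℝ}

lemma circleComm_apply_apply_apply (hF : F.Injective) (hG : G.Injective) (x : ℝ) :
    circleComm F G (G (F x)) = F (G x) := by
  simp [circleComm, Function.leftInverse_invFun hF _, Function.leftInverse_invFun hG _]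

lemma circleComm_apply_circleComm (hF : F.Bijective) (hG : G.Bijective) (x : ℝ) :
    circleComm F G (circleComm G F x) = x := by
  simp [circleComm, Function.leftInverse_invFun hF.1 _, Function.leftInverse_invFun hG.1 _,
    Function.rightInverse_invFun hF.2 _, Function.rightInverse_invFun hG.2 _]

lemma exists_circleComm_lt_add_one (hF : IsCircleLift F) (hG : IsCircleLift G) :
    ∃ y, circleComm F G y < y + 1 := by
  obtain ⟨x₀, hmin⟩ := hG.exists_forall_sub_self_le
  refine ⟨G (F x₀), ?_⟩
  rw [circleComm_apply_apply_apply hF.2.1.1 hG.2.1.1]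
  -- `F (G x₀) - G (F x₀) = (d_F (G x₀) - d_F x₀) + (d_G x₀ - d_G (F x₀))`
  linarith [(abs_lt.1 (hF.abs_sub_self_sub_sub_self_lt_one (G x₀) x₀)).2, hmin (F x₀)]

lemma exists_sub_one_lt_circleComm (hF : IsCircleLift F) (hG : IsCircleLift G) :
    ∃ y, y - 1 < circleComm F G y := by
  obtain ⟨z, hz⟩ := exists_circleComm_lt_add_one hG hF
  exact ⟨circleComm G F z, by rw [circleComm_apply_circleComm hF.2.1 hG.2.1]; linarith⟩

lemma exists_abs_circleComm_sub_lt_one (hF : IsCircleLift F) (hG : IsCircleLift G) :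
    ∃ y, |circleComm F G y - y| < 1 := by
  obtain ⟨y₁, hy₁⟩ := exists_circleComm_lt_add_one hF hG
  obtain ⟨y₂, hy₂⟩ := exists_sub_one_lt_circleComm hF hG
  by_cases h₁ : y₁ - 1 < circleComm F G y₁
  · exact ⟨y₁, abs_sub_lt_iff.2 ⟨by linarith, by linarith⟩⟩
  by_cases h₂ : circleComm F G y₂ < y₂ + 1
  · exact ⟨y₂, abs_sub_lt_iff.2 ⟨by linarith, by linarith⟩⟩
  obtain ⟨y, hy⟩ : (0 : ℝ) ∈ Set.range fun x => circleComm F G x - x :=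
    mem_range_of_exists_le_of_exists_ge ((hF.circleComm hG).continuous.sub continuous_id)
      ⟨y₁, by linarith⟩ ⟨y₂, by linarith⟩
  exact ⟨y, by simp [hy]⟩

lemma abs_circleComm_sub_lt_two (hF : IsCircleLift F) (hG : IsCircleLift G) (x : ℝ) :
    |circleComm F G x - x| < 2 := by
  obtain ⟨y, hy⟩ := exists_abs_circleComm_sub_lt_one hF hG
  have := (hF.circleComm hG).abs_sub_self_sub_sub_self_lt_one x y
  rw [abs_lt] at *
  constructor <;> linarith

end Commutator

/-- The Milnor–Wood inequality for flat circle bundles: if a `g`-fold product of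
commutators of lifts of orientation-preserving circle homeomorphisms is the
translation by an integer `e` (the Euler number), then `|e| ≤ 2 g - 2`. -/
theorem milnor_wood_inequality
    (g : ℕ) (hg : 1 ≤ g) (F G : Fin g → ℝ → ℝ)
    (hF : ∀ i, IsCircleLift (F i)) (hG : ∀ i, IsCircleLift (G i)) (e : ℤ)
    (h : (List.ofFn fun i => circleComm (F i) (G i)).foldr (· ∘ ·) id
        = fun x => x + (e : ℝ)) :
    |e| ≤ 2 * (g : ℤ) - 2 := by
  have hne : (List.ofFn fun i => circleComm (F i) (G i)) ≠ [] := by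
    simpa [List.ofFn_eq_nil_iff] using Nat.one_le_iff_ne_zero.1 hg
  obtain ⟨y, hy⟩ := abs_foldr_comp_sub_lt (a := 1) (b := 2) hne <| List.forall_mem_ofFn_iff.2
    fun i => ⟨exists_abs_circleComm_sub_lt_one (hF i) (hG i),
      abs_circleComm_sub_lt_two (hF i) (hG i)⟩
  rw [h, List.length_ofFn, add_sub_cancel_left] at hy
  have : |e| < 2 * (g : ℤ) - 1 := by exact_mod_cast (show |(e : ℝ)| < 2 * g - 1 by linarith)
  omega
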